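/- Let μ₂, μ₃, μ₅, μ₆ be real numbers and set λ₁ = μ₂ − μ₃ and λ₂ = μ₅ − μ₆, and assume λ₁ ≠ 0 and Parodi's relation μ₂ + μ₃ = μ₆ − μ₅. Let A be a symmetric real 3×3 matrix, B a skew-symmetric real 3×3 matrix, and d, v ∈ ℝ³. Define the vector Md for a matrix M by (Md)_i = Σ_k M_{ki} d_k, the tensor (x ⊗ y)_{ij} = x_i y_j, and M : N = Σ_{ij} M_{ij} N_{ij}. Let C_u = μ₂ (v + Bd) ⊗ d + μ₃ d ⊗ (v + Bd) + μ₅ (Ad) ⊗ d + μ₆ d ⊗ (Ad) and C_d = λ₁ Bd + λ₂ Ad. Then −C_u : (A + B) + C_d · v = λ₁ |v + Bd + (λ₂/λ₁) Ad|² − λ₁ |v|² − (μ₅ + μ₆ + λ₂²/λ₁) |Ad|². -/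

import Mathlib

open Matrix

/-!
Write `a = Ad` and `b = Bd`, so that `C_u` is built from the outer products of `d` with
`w = v + b` and with `a`. Contracting `x ⊗ y` against a matrix `M` gives `x · (y ᵥ* Mᵀ)`, and
`A + B` has transpose `A - B`; hence `C_u : (A + B)` is a combination of the dot products of `w`,
`a` and `b`. Both sides of the identity then become sums over one index of the same expression in
the components of `v`, `a` and `b`. The remaining scalar identity is completing the square:
Parodi's relation `μ₂ + μ₃ = -λ₂` is exactly what makes the cross term `2 λ₂ w · a` appear on
both sides.
-/

namespace Matrix

variable {n R : Type*} [Fintype n] [CommRing R]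

theorem sum_apply_mul_eq_vecMul_apply (M : Matrix n n R) (d : n → R) (i : n) :
    ∑ k, M k i * d k = (d ᵥ* M) i := by
  simp only [vecMul_apply_eq_sum, mul_comm]

theorem sum_sum_mul_mul_eq_dotProduct_vecMul_transpose (x y : n → R) (M : Matrix n n R) :
    ∑ i, ∑ j, x i * y j * M i j = x ⬝ᵥ (y ᵥ* Mᵀ) := by
  simp only [dotProduct, vecMul, transpose_apply, Finset.mul_sum]
  exact Finset.sum_congr rfl fun i _ => Finset.sum_congr rfl fun j _ => by ring

theorem sum_sum_mul_mul_eq_vecMul_dotProduct (x y : n → R) (M : Matrix n n R) :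
    ∑ i, ∑ j, x i * y j * M i j = (x ᵥ* M) ⬝ᵥ y := by
  rw [← dotProduct_mulVec, ← vecMul_transpose, sum_sum_mul_mul_eq_dotProduct_vecMul_transpose]

theorem sum_sum_leslieStress_mul (μ₂ μ₃ μ₅ μ₆ : R) (w d a : n → R) (M : Matrix n n R) :
    ∑ i, ∑ j, (μ₂ * w i * d j + μ₃ * d i * w j + μ₅ * a i * d j + μ₆ * d i * a j) * M i j
      = μ₂ * (w ⬝ᵥ (d ᵥ* Mᵀ)) + μ₃ * ((d ᵥ* M) ⬝ᵥ w)
        + μ₅ * (a ⬝ᵥ (d ᵥ* Mᵀ)) + μ₆ * ((d ᵥ* M) ⬝ᵥ a) := by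
  simp only [← sum_sum_mul_mul_eq_dotProduct_vecMul_transpose,
    ← sum_sum_mul_mul_eq_vecMul_dotProduct, Finset.mul_sum, ← Finset.sum_add_distrib]
  exact Finset.sum_congr rfl fun i _ => Finset.sum_congr rfl fun j _ => by ring

end Matrix

/-- The key cancellation identity between the Leslie stress `C_u` and the director
forcing `C_d` of the Ericksen–Leslie system, under Parodi's relation. Here
`(Md)_i = ∑ k, M k i * d k`, `λ₁ = μ₂ - μ₃`, `λ₂ = μ₅ - μ₆`. -/
theorem stmt4 (μ₂ μ₃ μ₅ μ₆ : ℝ)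
    (hlam : μ₂ - μ₃ ≠ 0) (hParodi : μ₂ + μ₃ = μ₆ - μ₅)
    (A B : Matrix (Fin 3) (Fin 3) ℝ) (hA : Aᵀ = A) (hB : Bᵀ = -B)
    (d v : Fin 3 → ℝ) :
    -(∑ i, ∑ j,
        (μ₂ * (v i + ∑ k, B k i * d k) * d j
          + μ₃ * d i * (v j + ∑ k, B k j * d k)
          + μ₅ * (∑ k, A k i * d k) * d j
          + μ₆ * d i * (∑ k, A k j * d k)) * (A i j + B i j))
      + ∑ i, ((μ₂ - μ₃) * (∑ k, B k i * d k) + (μ₅ - μ₆) * (∑ k, A k i * d k)) * v i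
    = (μ₂ - μ₃) *
        ∑ i, (v i + (∑ k, B k i * d k)
                + ((μ₅ - μ₆) / (μ₂ - μ₃)) * (∑ k, A k i * d k)) ^ 2
      - (μ₂ - μ₃) * ∑ i, (v i) ^ 2
      - (μ₅ + μ₆ + (μ₅ - μ₆) ^ 2 / (μ₂ - μ₃)) * ∑ i, (∑ k, A k i * d k) ^ 2 := by
  simp only [sum_apply_mul_eq_vecMul_apply]
  have hCu := sum_sum_leslieStress_mul μ₂ μ₃ μ₅ μ₆ (v + d ᵥ* B) d (d ᵥ* A) (A + B)
  simp only [Pi.add_apply, Matrix.add_apply, transpose_add, hA, hB, vecMul_add, vecMul_neg] at hCu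
  rw [hCu]
  set a := d ᵥ* A
  set b := d ᵥ* B
  simp only [dotProduct, Pi.add_apply, Pi.neg_apply, Finset.mul_sum, ← Finset.sum_add_distrib,
    ← Finset.sum_sub_distrib, ← Finset.sum_neg_distrib]
  refine Finset.sum_congr rfl fun i _ => ?_
  field_simp
  linear_combination -(μ₂ - μ₃) * (v i + b i) * a i * hParodi
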